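/- (Corollary: simplified failure bound) Under the assumptions of the utility extension theorem with Δ̃ = LΔ, the failure probability satisfies δ̃ ≤ exp(L²Δ²/σ²) · δ^{1/2}. -/

import Mathlib

/-!
Write `t = LΔ/σ`, `P = N(-t, 1)` and `Q = N(0, 1)`. The Gaussian part of the objective is
`P(A) - e^v Q(A)` for the half-line `A = (-∞, -t/2 - v/t]`, and the pointwise inequality
`p - e^v q ≤ p² / (4 e^v q)` bounds it by `e^{-v} ∫ p²/q / 4 = e^{t² - v} / 4`: this is the order-2
Rényi divergence `D₂(P ‖ Q) = t²`. Minimising `δ e^v + e^{t²} e^{-v} / 4` over `v` leaves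
`e^{t²/2} √δ`.
-/

open MeasureTheory ProbabilityTheory

/-- Standard normal CDF. -/
noncomputable def Phi (x : ℝ) : ℝ := ((gaussianReal 0 1) (Set.Iic x)).toReal

open Real Set

lemma Phi_add_eq_gaussianReal (c t : ℝ) : Phi (c + t) = (gaussianReal (-t) 1 (Iic c)).toReal := by
  have hmap := gaussianReal_map_add_const (μ := -t) (v := 1) t
  rw [neg_add_cancel] at hmap
  rw [Phi, ← hmap, Measure.map_apply (measurable_add_const t) measurableSet_Iic]
  congr 3
  ext z
  simp

lemma gaussianPDFReal_eq_mul_exp (m u : ℝ) :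
    gaussianPDFReal m 1 u = gaussianPDFReal 0 1 u * exp (m * u - m ^ 2 / 2) := by
  simp only [gaussianPDFReal, NNReal.coe_one, mul_one, mul_assoc, ← exp_add]
  ring_nf

lemma sub_le_sq_div_four_mul {a b : ℝ} (hb : 0 < b) : a - b ≤ a ^ 2 / (4 * b) := by
  rw [le_div_iff₀ (by positivity)]
  nlinarith [sq_nonneg (a - 2 * b)]

lemma gaussianPDFReal_sub_exp_mul_le (m v u : ℝ) :
    gaussianPDFReal m 1 u - exp v * gaussianPDFReal 0 1 u
      ≤ exp (m ^ 2) / 4 * exp (-v) * gaussianPDFReal (2 * m) 1 u := by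
  have hsq : exp (m ^ 2) * exp (-v) * exp (2 * m * u - (2 * m) ^ 2 / 2)
      = exp (m * u - m ^ 2 / 2) ^ 2 / exp v := by
    rw [exp_neg, ← exp_nat_mul, mul_right_comm, ← exp_add, div_eq_mul_inv]
    congr 2
    push_cast
    ring
  calc gaussianPDFReal m 1 u - exp v * gaussianPDFReal 0 1 u
      = gaussianPDFReal 0 1 u * (exp (m * u - m ^ 2 / 2) - exp v) := by
        rw [gaussianPDFReal_eq_mul_exp m]; ring
    _ ≤ gaussianPDFReal 0 1 u * (exp (m * u - m ^ 2 / 2) ^ 2 / (4 * exp v)) :=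
        mul_le_mul_of_nonneg_left (sub_le_sq_div_four_mul (exp_pos v))
          (gaussianPDFReal_nonneg 0 1 u)
    _ = exp (m ^ 2) / 4 * exp (-v) * gaussianPDFReal (2 * m) 1 u := by
        rw [gaussianPDFReal_eq_mul_exp (2 * m), div_mul_eq_mul_div, mul_div_assoc, mul_comm 4,
          ← div_div, ← hsq]
        ring

lemma toReal_gaussianReal_apply_eq_integral (m : ℝ) (s : Set ℝ) :
    (gaussianReal m 1 s).toReal = ∫ u in s, gaussianPDFReal m 1 u := by
  rw [gaussianReal_apply_eq_integral m one_ne_zero, ENNReal.toReal_ofReal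
    (setIntegral_nonneg_of_ae (Filter.Eventually.of_forall fun u => gaussianPDFReal_nonneg m 1 u))]

lemma toReal_gaussianReal_sub_exp_mul_le (m v : ℝ) (s : Set ℝ) :
    (gaussianReal m 1 s).toReal - exp v * (gaussianReal 0 1 s).toReal
      ≤ exp (m ^ 2) / 4 * exp (-v) := by
  have hint (m' : ℝ) : IntegrableOn (gaussianPDFReal m' 1) s :=
    (integrable_gaussianPDFReal m' 1).integrableOn
  have hdom : ∫ u in s, gaussianPDFReal (2 * m) 1 u ≤ 1 := by
    rw [← toReal_gaussianReal_apply_eq_integral]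
    exact ENNReal.toReal_le_of_le_ofReal zero_le_one (ENNReal.ofReal_one ▸ prob_le_one)
  rw [toReal_gaussianReal_apply_eq_integral, toReal_gaussianReal_apply_eq_integral,
    ← integral_const_mul, ← integral_sub (hint m) ((hint 0).const_mul _)]
  calc ∫ u in s, (gaussianPDFReal m 1 u - exp v * gaussianPDFReal 0 1 u)
      ≤ ∫ u in s, exp (m ^ 2) / 4 * exp (-v) * gaussianPDFReal (2 * m) 1 u :=
        setIntegral_mono ((hint m).sub ((hint 0).const_mul _)) ((hint _).const_mul _)
          (gaussianPDFReal_sub_exp_mul_le m v)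
    _ ≤ exp (m ^ 2) / 4 * exp (-v) := by
        rw [integral_const_mul]
        exact mul_le_of_le_one_right (by positivity) hdom

lemma Phi_sub_exp_mul_Phi_le (t v : ℝ) :
    Phi (t / 2 - v / t) - exp v * Phi (-(t / 2) - v / t) ≤ exp (t ^ 2) / 4 * exp (-v) := by
  have h := toReal_gaussianReal_sub_exp_mul_le (-t) v (Iic (-(t / 2) - v / t))
  rwa [← Phi_add_eq_gaussianReal, neg_sq, ← Phi,
    show -(t / 2) - v / t + t = t / 2 - v / t by ring] at h

lemma iInf_le_two_mul_sqrt_of_le_mul_exp_add {f : ℝ → ℝ} {a δ : ℝ} (ha : 0 < a) (hδ : 0 ≤ δ)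
    (hf : ∀ v, f v ≤ δ * exp v + a * exp (-v)) : ⨅ v, f v ≤ 2 * √(a * δ) := by
  by_cases hbdd : BddBelow (range f)
  · rcases hδ.eq_or_lt with rfl | hδ
    · refine le_of_forall_gt_imp_ge_of_dense fun ε hε => (ciInf_le hbdd (log (a / ε))).trans ?_
      have hε : 0 < ε := by simpa using hε
      calc f (log (a / ε)) ≤ 0 * exp (log (a / ε)) + a * exp (-log (a / ε)) := hf _
        _ = ε := by rw [exp_neg, exp_log (by positivity)]; field_simp; ring
    · calc ⨅ v, f v ≤ f (log (√a / √δ)) := ciInf_le hbdd _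
          _ ≤ δ * exp (log (√a / √δ)) + a * exp (-log (√a / √δ)) := hf _
          _ = 2 * √(a * δ) := by
            rw [exp_neg, exp_log (by positivity), sqrt_mul ha.le]
            field_simp
            rw [sq_sqrt ha.le, sq_sqrt hδ.le]
            ring
  · rw [Real.iInf_of_not_bddBelow hbdd]
    positivity

theorem simplified_failure_bound_general (L Δ σ δ : ℝ) (hδ0 : 0 ≤ δ) :
    (⨅ v : ℝ, (δ * Real.exp v + Phi (L * Δ / (2 * σ) - v * σ / (L * Δ))
        - Real.exp v * Phi (-(L * Δ / (2 * σ)) - v * σ / (L * Δ))))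
      ≤ Real.exp (L ^ 2 * Δ ^ 2 / σ ^ 2) * δ ^ ((1 : ℝ) / 2) := by
  set t := L * Δ / σ with ht
  have hf (v : ℝ) : δ * exp v + Phi (L * Δ / (2 * σ) - v * σ / (L * Δ))
      - exp v * Phi (-(L * Δ / (2 * σ)) - v * σ / (L * Δ))
      ≤ δ * exp v + exp (t ^ 2) / 4 * exp (-v) := by
    rw [show L * Δ / (2 * σ) = t / 2 by rw [ht]; ring,
      show v * σ / (L * Δ) = v / t by rw [ht, div_div_eq_mul_div]]
    linarith [Phi_sub_exp_mul_Phi_le t v]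
  calc _ ≤ 2 * √(exp (t ^ 2) / 4 * δ) :=
        iInf_le_two_mul_sqrt_of_le_mul_exp_add (by positivity) hδ0 hf
    _ = exp (t ^ 2 / 2) * δ ^ ((1 : ℝ) / 2) := by
        rw [← sqrt_eq_rpow, exp_half, ← sqrt_mul (exp_pos _).le,
          show exp (t ^ 2) / 4 * δ = exp (t ^ 2) * δ / 2 ^ 2 by ring, sqrt_div' _ (by norm_num),
          sqrt_sq zero_le_two]
        ring
    _ ≤ exp (L ^ 2 * Δ ^ 2 / σ ^ 2) * δ ^ ((1 : ℝ) / 2) := by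
        refine mul_le_mul_of_nonneg_right (exp_le_exp.2 ?_) (by positivity)
        rw [show L ^ 2 * Δ ^ 2 / σ ^ 2 = t ^ 2 by rw [ht]; ring]
        linarith [sq_nonneg t]

/-- Simplified failure bound: with Δ̃ = LΔ, the optimal-over-v failure probability
δ̃ = inf_v [δ·e^v + Φ(LΔ/(2σ) - vσ/(LΔ)) - e^v·Φ(-LΔ/(2σ) - vσ/(LΔ))] satisfies
δ̃ ≤ exp(L²Δ²/σ²) · δ^{1/2}. -/
theorem simplified_failure_bound (L Δ σ δ : ℝ) (hσ : 0 < σ) (hLΔ : 0 < L * Δ)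
    (hδ0 : 0 ≤ δ) (hδ1 : δ ≤ 1) :
    (⨅ v : ℝ, (δ * Real.exp v + Phi (L * Δ / (2 * σ) - v * σ / (L * Δ))
        - Real.exp v * Phi (-(L * Δ / (2 * σ)) - v * σ / (L * Δ))))
      ≤ Real.exp (L ^ 2 * Δ ^ 2 / σ ^ 2) * δ ^ ((1 : ℝ) / 2) :=
  simplified_failure_bound_general L Δ σ δ hδ0
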